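/- Let τ ∈ ℂ with Im τ > 0, let ε, δ ∈ {0,1}, let v ∈ ℂ, and let p = (mτ + n)/2 for some integers m, n (a half-period). Then θ[ε;δ](τ, 3v + p) · θ[ε;δ](τ, v − p)³ = θ[ε;δ](τ, 3v − p) · θ[ε;δ](τ, v + p)³. -/

import Mathlib

/-!
Since `2p = mτ + n` is a lattice period, `3v + p` and `v + p` are the translates of `3v - p` and
`v - p` by `2p`, and quasi-periodicity turns both sides into the same product as soon as the
automorphy factor at `3v - p` is the cube of the one at `v - p`. The two exponents differ by
`2πi` times the integer `m n - m δ + ε n`.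
-/

open Complex

/-- The genus-one theta function with characteristic `[ε; δ]`. -/
noncomputable def theta1 (ε δ : ℤ) (τ z : ℂ) : ℂ :=
  ∑' n : ℤ,
    Complex.exp (↑Real.pi * I * ((n : ℂ) + (ε : ℂ)/2)^2 * τ +
      2 * ↑Real.pi * I * ((n : ℂ) + (ε : ℂ)/2) * (z + (δ : ℂ)/2))

noncomputable def theta1Factor (ε δ : ℤ) (τ : ℂ) (m n : ℤ) (z : ℂ) : ℂ :=
  exp (-(↑Real.pi * I) * ((m : ℂ) ^ 2 * τ + 2 * m * z + m * δ - ε * n))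

lemma theta1_add_period (ε δ : ℤ) (τ z : ℂ) (m n : ℤ) :
    theta1 ε δ τ (z + ((m : ℂ) * τ + n)) =
      theta1Factor ε δ τ m n z * theta1 ε δ τ z := by
  -- reindex the sum by `j ↦ j - m`; the exponents then differ by `2πi n (j - m)`
  unfold theta1 theta1Factor
  rw [← tsum_mul_left, ← (Equiv.subRight m).tsum_eq]
  refine tsum_congr fun j => ?_
  rw [Equiv.subRight_apply, ← exp_add]
  have hexponent : ↑Real.pi * I * (((j - m : ℤ) : ℂ) + (ε : ℂ) / 2) ^ 2 * τ +
      2 * ↑Real.pi * I * (((j - m : ℤ) : ℂ) + (ε : ℂ) / 2) *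
        (z + ((m : ℂ) * τ + n) + (δ : ℂ) / 2) =
      (-(↑Real.pi * I) * ((m : ℂ) ^ 2 * τ + 2 * m * z + m * δ - ε * n) +
        (↑Real.pi * I * ((j : ℂ) + (ε : ℂ) / 2) ^ 2 * τ +
          2 * ↑Real.pi * I * ((j : ℂ) + (ε : ℂ) / 2) * (z + (δ : ℂ) / 2))) +
        ((n * (j - m) : ℤ) : ℂ) * (2 * ↑Real.pi * I) := by
    push_cast
    ring
  rw [hexponent, exp_add, exp_int_mul_two_pi_mul_I, mul_one]

lemma theta1Factor_three_mul_sub_half_period (ε δ : ℤ) (τ v : ℂ) (m n : ℤ) :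
    theta1Factor ε δ τ m n (3 * v - ((m : ℂ) * τ + n) / 2) =
      theta1Factor ε δ τ m n (v - ((m : ℂ) * τ + n) / 2) ^ 3 := by
  unfold theta1Factor
  rw [← exp_nat_mul]
  have hexponent : ((3 : ℕ) : ℂ) * (-(↑Real.pi * I) *
        ((m : ℂ) ^ 2 * τ + 2 * m * (v - ((m : ℂ) * τ + n) / 2) + m * δ - ε * n)) =
      -(↑Real.pi * I) *
          ((m : ℂ) ^ 2 * τ + 2 * m * (3 * v - ((m : ℂ) * τ + n) / 2) + m * δ - ε * n) +
        ((m * n - m * δ + ε * n : ℤ) : ℂ) * (2 * ↑Real.pi * I) := by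
    push_cast
    ring
  rw [hexponent, exp_add, exp_int_mul_two_pi_mul_I, mul_one]

theorem stmt_17_general (τ : ℂ) (ε δ : ℤ) (v : ℂ) (m n : ℤ) :
    theta1 ε δ τ (3 * v + ((m : ℂ) * τ + (n : ℂ)) / 2) *
        theta1 ε δ τ (v - ((m : ℂ) * τ + (n : ℂ)) / 2) ^ 3 =
      theta1 ε δ τ (3 * v - ((m : ℂ) * τ + (n : ℂ)) / 2) *
        theta1 ε δ τ (v + ((m : ℂ) * τ + (n : ℂ)) / 2) ^ 3 := by
  have htranslate (w : ℂ) :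
      w + ((m : ℂ) * τ + n) / 2 = (w - ((m : ℂ) * τ + n) / 2) + ((m : ℂ) * τ + n) := by
    ring
  rw [htranslate, htranslate v, theta1_add_period, theta1_add_period,
    theta1Factor_three_mul_sub_half_period]
  ring

/-- The identity `θ(3v+p)θ(v−p)³ = θ(3v−p)θ(v+p)³` for any half-period
`p = (mτ+n)/2`. -/
theorem stmt_17 (τ : ℂ) (hτ : 0 < τ.im) (ε δ : ℤ) (hε : ε = 0 ∨ ε = 1)
    (hδ : δ = 0 ∨ δ = 1) (v : ℂ) (m n : ℤ) :
    theta1 ε δ τ (3 * v + ((m : ℂ) * τ + (n : ℂ)) / 2) *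
        theta1 ε δ τ (v - ((m : ℂ) * τ + (n : ℂ)) / 2) ^ 3 =
      theta1 ε δ τ (3 * v - ((m : ℂ) * τ + (n : ℂ)) / 2) *
        theta1 ε δ τ (v + ((m : ℂ) * τ + (n : ℂ)) / 2) ^ 3 :=
  stmt_17_general τ ε δ v m n
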